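/- For every real μ > 0, the series whose terms are μ³/( (a·c + μ²·b·d)·( a·(a+c) + μ²·b·(b+d) )·( (a+c)·c + μ²·(b+d)·d ) ), summed over all quadruples (a,b,c,d) of nonnegative integers with a ≥ b, c ≥ d and a·d − b·c = 1, converges and its sum equals μ − arctan(μ). -/

import Mathlib

/-!
Read `(a, b, c, d) ∈ T` as the matrix with columns `(a, b)` and `(c, d)`. Every element of `T` is
reached exactly once from `(1, 0, 1, 1)` by the Stern–Brocot moves replacing `(c, d)` or `(a, b)`
by `(a + c, b + d)`, so the series runs over a complete binary tree.

Let `P = a c + μ² b d` be the polarization of `x² + μ² y²` on the two columns, and `P₀, P₁` its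
values at the two children. Lagrange's identity gives `P₀ P₁ - P (P₀ + P₁) = μ² (a d - b c)² = μ²`,
which says both that the summand equals `μ/P - μ/P₀ - μ/P₁` and that
`arctan (μ/P) = arctan (μ/P₀) + arctan (μ/P₁)`. So `φ = μ/P - arctan (μ/P)` satisfies
`φ(node) = summand + φ(child₀) + φ(child₁)`, and the series telescopes to `φ(root) = μ - arctan μ`,
provided the sum of `φ` over the `n`-th level tends to `0`. It does: on that level `P ≥ n + 1`, hence
`φ ≤ (μ/(n+1))² arctan (μ/P)` by `t - arctan t ≤ t² arctan t`, while the `arctan (μ/P)` add up to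
`arctan μ` on every level.
-/

/-- Quadruples `(a,b,c,d)` of integers with `a ≥ b ≥ 0`, `c ≥ d ≥ 0` and `a·d − b·c = 1`. -/
def T : Set (ℤ × ℤ × ℤ × ℤ) :=
  {p | p.2.1 ≤ p.1 ∧ 0 ≤ p.2.1 ∧ p.2.2.2 ≤ p.2.2.1 ∧ 0 ≤ p.2.2.2 ∧
    p.1 * p.2.2.2 - p.2.1 * p.2.2.1 = 1}

open Filter Topology Finset

theorem hasSum_of_tendsto_sum_of_monotone {β : Type*} {f : β → ℝ} (hf : 0 ≤ f)
    {B : ℕ → Finset β} (hB : Monotone B) (hcover : ∀ x, ∃ n, x ∈ B n) {a : ℝ}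
    (h : Tendsto (fun n => ∑ x ∈ B n, f x) atTop (𝓝 a)) : HasSum f a := by
  have hsum_mono : Monotone fun n => ∑ x ∈ B n, f x := fun m n hmn =>
    sum_le_sum_of_subset_of_nonneg (hB hmn) fun x _ _ => hf x
  have hsummable : Summable f := by
    refine summable_of_sum_le (c := a) hf fun s => ?_
    obtain ⟨n, hn⟩ : ∃ n, s ⊆ B n := by
      choose N hN using hcover
      exact ⟨s.sup N, fun x hx => hB (le_sup hx) (hN x)⟩
    exact (sum_le_sum_of_subset_of_nonneg hn fun x _ _ => hf x).trans
      (hsum_mono.ge_of_tendsto h n)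
  have hlim := hsummable.hasSum.comp (tendsto_atTop_finset_of_monotone hB hcover)
  exact tendsto_nhds_unique hlim h ▸ hsummable.hasSum

section Tuples

variable {α M : Type*} [Fintype α] [AddCommMonoid M]

theorem sum_ofFn_succ (G : List α → M) (n : ℕ) :
    ∑ w : Fin (n + 1) → α, G (List.ofFn w) = ∑ w : Fin n → α, ∑ a, G (a :: List.ofFn w) := by
  rw [← Fintype.sum_equiv (Fin.consEquiv fun _ => α) (fun aw => G (aw.1 :: List.ofFn aw.2)) _
    fun aw => by simp [Fin.consEquiv], Fintype.sum_prod_type, Finset.sum_comm]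

theorem sum_ofFn_eq_of_eq_sum_cons {G : List α → M} (hG : ∀ w, G w = ∑ a, G (a :: w)) (n : ℕ) :
    ∑ w : Fin n → α, G (List.ofFn w) = G [] := by
  induction n with
  | zero => simp
  | succ n ih => simp only [sum_ofFn_succ, ← hG, ih]

theorem hasSum_of_eq_add_sum_cons {f F : List α → ℝ} (hf : 0 ≤ f)
    (hF : ∀ w, F w = f w + ∑ a, F (a :: w))
    (hlim : Tendsto (fun n => ∑ w : Fin n → α, F (List.ofFn w)) atTop (𝓝 0)) :
    HasSum f (F []) := by
  have hlevel (n : ℕ) : ∑ w : Fin n → α, f (List.ofFn w) =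
      ∑ w : Fin n → α, F (List.ofFn w) - ∑ w : Fin (n + 1) → α, F (List.ofFn w) := by
    rw [eq_sub_iff_add_eq, sum_ofFn_succ, ← sum_add_distrib]
    exact sum_congr rfl fun w _ => (hF _).symm
  rw [← List.equivSigmaTuple.symm.hasSum_iff]
  refine hasSum_of_tendsto_sum_of_monotone (f := f ∘ List.equivSigmaTuple.symm) (fun _ => hf _)
    (B := fun n => (range n).sigma fun _ => univ) ?_ ?_ ?_
  · exact fun m n hmn => sigma_mono (range_mono hmn) fun _ _ => id
  · exact fun x => ⟨x.1 + 1, by simp⟩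
  · simp only [sum_sigma, Function.comp_apply, List.equivSigmaTuple_symm_apply, hlevel,
      sum_range_sub']
    simpa using hlim.const_sub (F [])

end Tuples

namespace Real

theorem arctan_le_self {t : ℝ} (ht : 0 ≤ t) : arctan t ≤ t := by
  simpa only [tan_arctan] using le_tan (arctan_nonneg.2 ht) (arctan_lt_pi_div_two t)

theorem div_one_add_sq_le_arctan {t : ℝ} (ht : 0 ≤ t) : t / (1 + t ^ 2) ≤ arctan t := by
  have hcos : 0 < cos (arctan t) := cos_arctan_pos t
  have hsin : sin (arctan t) = t * cos (arctan t) := by rw [sin_arctan, cos_arctan]; ring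
  have hcos_sq : cos (arctan t) ^ 2 = 1 / (1 + t ^ 2) := by
    rw [← inv_one_add_tan_sq hcos.ne', tan_arctan, one_div]
  have h2θ : sin (2 * arctan t) ≤ 2 * arctan t := sin_le (by positivity)
  rw [sin_two_mul, hsin] at h2θ
  rw [div_eq_mul_one_div, ← hcos_sq]
  nlinarith

theorem sub_arctan_le_sq_mul_arctan {t : ℝ} (ht : 0 ≤ t) : t - arctan t ≤ t ^ 2 * arctan t := by
  have := div_one_add_sq_le_arctan ht
  rw [div_le_iff₀ (by positivity)] at this
  linarith

theorem arctan_div_eq_add_arctan_div {μ P Q R : ℝ} (hP : 0 < P) (hQ : 0 < Q) (hR : 0 < R)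
    (h : Q * R - P * (Q + R) = μ ^ 2) : arctan (μ / P) = arctan (μ / Q) + arctan (μ / R) := by
  have hlt : μ / Q * (μ / R) < 1 := by
    rw [div_mul_div_comm, div_lt_one (by positivity)]
    nlinarith [mul_pos hP (add_pos hQ hR)]
  rw [arctan_add hlt]
  congr 1
  rw [eq_div_iff (sub_pos.2 hlt).ne']
  field_simp
  linear_combination μ * h

theorem cube_div_mul_mul_eq_sub {μ P Q R : ℝ} (hP : P ≠ 0) (hQ : Q ≠ 0) (hR : R ≠ 0)
    (h : Q * R - P * (Q + R) = μ ^ 2) : μ ^ 3 / (P * Q * R) = μ / P - μ / Q - μ / R := by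
  field_simp
  linear_combination (-μ) * h

end Real

namespace SternBrocot

def root : ℤ × ℤ × ℤ × ℤ := (1, 0, 1, 1)

def child : Bool → ℤ × ℤ × ℤ × ℤ → ℤ × ℤ × ℤ × ℤ
  | false, (a, b, c, d) => (a, b, a + c, b + d)
  | true, (a, b, c, d) => (a + c, b + d, c, d)

def node : List Bool → ℤ × ℤ × ℤ × ℤ
  | [] => root
  | x :: w => child x (node w)

theorem pos_of_mem_T {p : ℤ × ℤ × ℤ × ℤ} (hp : p ∈ T) : 0 < p.1 ∧ 0 < p.2.2.1 := by
  obtain ⟨a, b, c, d⟩ := p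
  obtain ⟨hba, hb, hdc, hd, hdet⟩ := hp
  constructor <;> nlinarith

theorem root_mem_T : root ∈ T := by simp [T, root]

theorem child_mem_T (x : Bool) {p : ℤ × ℤ × ℤ × ℤ} (hp : p ∈ T) : child x p ∈ T := by
  obtain ⟨a, b, c, d⟩ := p
  obtain ⟨hba, hb, hdc, hd, hdet⟩ := hp
  cases x <;> refine ⟨?_, ?_, ?_, ?_, ?_⟩ <;> dsimp only [child] at * <;> linarith

theorem node_mem_T : ∀ w, node w ∈ T
  | [] => root_mem_T
  | x :: w => child_mem_T x (node_mem_T w)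

theorem child_ne_root (x : Bool) {p : ℤ × ℤ × ℤ × ℤ} (hp : p ∈ T) : child x p ≠ root := by
  obtain ⟨a, b, c, d⟩ := p
  have := pos_of_mem_T hp
  dsimp only at this
  cases x <;> simp only [child, root, ne_eq, Prod.mk.injEq] <;> omega

theorem child_inj {x y : Bool} {p q : ℤ × ℤ × ℤ × ℤ} (hp : p ∈ T) (hq : q ∈ T)
    (h : child x p = child y q) : x = y ∧ p = q := by
  obtain ⟨a, b, c, d⟩ := p
  obtain ⟨a', b', c', d'⟩ := q
  have hp' := pos_of_mem_T hp
  have hq' := pos_of_mem_T hq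
  dsimp only at hp' hq'
  cases x <;> cases y <;>
    simp only [child, Prod.mk.injEq, Bool.false_eq_true, Bool.true_eq_false, true_and, false_and]
      at h ⊢ <;> omega

theorem node_injective : Function.Injective node := by
  intro w
  induction w with
  | nil =>
    rintro (_ | ⟨y, v⟩) h
    · rfl
    · exact absurd h.symm (child_ne_root y (node_mem_T v))
  | cons x w ih =>
    rintro (_ | ⟨y, v⟩) h
    · exact absurd h (child_ne_root x (node_mem_T w))
    · obtain ⟨rfl, hwv⟩ := child_inj (node_mem_T w) (node_mem_T v) h
      rw [ih hwv]

theorem exists_child_eq_of_ne_root {p : ℤ × ℤ × ℤ × ℤ} (hp : p ∈ T) (hne : p ≠ root) :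
    ∃ x q, q ∈ T ∧ child x q = p ∧ q.1 + q.2.2.1 < p.1 + p.2.2.1 := by
  obtain ⟨a, b, c, d⟩ := p
  have ⟨ha, hc⟩ := pos_of_mem_T hp
  obtain ⟨hba, hb, hdc, hd, hdet⟩ := hp
  dsimp only at *
  rcases lt_trichotomy a c with hac | rfl | hca
  · have hbd : b ≤ d := by nlinarith
    refine ⟨false, (a, b, c - a, d - b), ⟨hba, hb, ?_, ?_, ?_⟩, ?_, ?_⟩ <;> dsimp only [child] <;>
      first | nlinarith | simp
  · have ha1 : a = 1 := Int.eq_one_of_mul_eq_one_right ha.le (by linarith : a * (d - b) = 1)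
    subst ha1
    exact (hne (by simp only [root, Prod.mk.injEq, true_and]; omega)).elim
  · have hdb : d ≤ b := by nlinarith
    refine ⟨true, (a - c, b - d, c, d), ⟨?_, ?_, hdc, hd, ?_⟩, ?_, ?_⟩ <;> dsimp only [child] <;>
      first | nlinarith | simp

theorem exists_node_eq {p : ℤ × ℤ × ℤ × ℤ} (hp : p ∈ T) : ∃ w, node w = p := by
  induction h : (p.1 + p.2.2.1).toNat using Nat.strong_induction_on generalizing p with
  | _ n ih =>
  by_cases hroot : p = root
  · exact ⟨[], hroot.symm⟩
  obtain ⟨x, q, hq, rfl, hlt⟩ := exists_child_eq_of_ne_root hp hroot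
  have := pos_of_mem_T hq
  obtain ⟨w, rfl⟩ := ih _ (by omega) hq rfl
  exact ⟨x :: w, rfl⟩

theorem length_lt_node_mul : ∀ w : List Bool, (w.length : ℤ) < (node w).1 * (node w).2.2.1
  | [] => by simp [node, root]
  | x :: w => by
    have ih := length_lt_node_mul w
    have hpos := pos_of_mem_T (node_mem_T w)
    obtain ⟨a, b, c, d⟩ := node w
    cases x <;> simp only [node, child, List.length_cons] <;> push_cast <;> nlinarith

noncomputable def nodeEquiv : List Bool ≃ T :=
  Equiv.ofBijective (fun w => ⟨node w, node_mem_T w⟩)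
    ⟨fun _ _ h => node_injective (congrArg Subtype.val h),
      fun p => (exists_node_eq p.2).imp fun _ hw => Subtype.ext hw⟩

def weight (μ : ℝ) (p : ℤ × ℤ × ℤ × ℤ) : ℝ := p.1 * p.2.2.1 + μ ^ 2 * p.2.1 * p.2.2.2

section Weight

variable (μ : ℝ)

theorem weight_child_mul_sub {p : ℤ × ℤ × ℤ × ℤ} (hp : p ∈ T) :
    weight μ (child false p) * weight μ (child true p) -
      weight μ p * (weight μ (child false p) + weight μ (child true p)) = μ ^ 2 := by
  obtain ⟨a, b, c, d⟩ := p
  have hdet : (a * d - b * c : ℝ) = 1 := by exact_mod_cast hp.2.2.2.2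
  simp only [weight, child]
  push_cast
  linear_combination μ ^ 2 * (a * d - b * c + 1) * hdet

theorem length_add_one_le_weight_node (w : List Bool) :
    (w.length : ℝ) + 1 ≤ weight μ (node w) := by
  have hlen : (w.length + 1 : ℝ) ≤ (node w).1 * (node w).2.2.1 := by
    exact_mod_cast length_lt_node_mul w
  obtain ⟨-, hb, -, hd, -⟩ := node_mem_T w
  have : (0 : ℝ) ≤ μ ^ 2 * (node w).2.1 * (node w).2.2.2 := by positivity
  rw [weight]
  linarith

theorem weight_node_pos (w : List Bool) : 0 < weight μ (node w) :=
  (by positivity : (0 : ℝ) < w.length + 1).trans_le (length_add_one_le_weight_node μ w)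

end Weight

section Excess

variable (μ : ℝ)

noncomputable def ratio (w : List Bool) : ℝ := μ / weight μ (node w)

noncomputable def summand (p : ℤ × ℤ × ℤ × ℤ) : ℝ :=
  μ ^ 3 / (weight μ p * weight μ (child false p) * weight μ (child true p))

theorem ratio_nil : ratio μ [] = μ := by simp [ratio, node, weight, root]

theorem arctan_ratio_eq_sum (w : List Bool) :
    Real.arctan (ratio μ w) = ∑ x, Real.arctan (ratio μ (x :: w)) := by
  rw [Fintype.sum_bool, add_comm]
  exact Real.arctan_div_eq_add_arctan_div (weight_node_pos μ w) (weight_node_pos μ (false :: w))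
    (weight_node_pos μ (true :: w)) (weight_child_mul_sub μ (node_mem_T w))

theorem ratio_sub_arctan_eq (w : List Bool) :
    ratio μ w - Real.arctan (ratio μ w) =
      summand μ (node w) + ∑ x, (ratio μ (x :: w) - Real.arctan (ratio μ (x :: w))) := by
  have hsummand := Real.cube_div_mul_mul_eq_sub (weight_node_pos μ w).ne'
    (weight_node_pos μ (false :: w)).ne' (weight_node_pos μ (true :: w)).ne'
    (weight_child_mul_sub μ (node_mem_T w))
  rw [arctan_ratio_eq_sum, Fintype.sum_bool, Fintype.sum_bool, summand]
  simp only [ratio, node] at hsummand ⊢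
  rw [hsummand]
  ring

theorem sum_arctan_ratio (n : ℕ) :
    ∑ w : Fin n → Bool, Real.arctan (ratio μ (List.ofFn w)) = Real.arctan μ := by
  rw [sum_ofFn_eq_of_eq_sum_cons (arctan_ratio_eq_sum μ), ratio_nil]

variable {μ}

theorem ratio_sub_arctan_le (hμ : 0 ≤ μ) (w : List Bool) :
    ratio μ w - Real.arctan (ratio μ w) ≤ (μ / (w.length + 1)) ^ 2 * Real.arctan (ratio μ w) := by
  have hratio : 0 ≤ ratio μ w := div_nonneg hμ (weight_node_pos μ w).le
  have hle : ratio μ w ≤ μ / (w.length + 1) :=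
    div_le_div_of_nonneg_left hμ (by positivity) (length_add_one_le_weight_node μ w)
  calc ratio μ w - Real.arctan (ratio μ w) ≤ ratio μ w ^ 2 * Real.arctan (ratio μ w) :=
        Real.sub_arctan_le_sq_mul_arctan hratio
    _ ≤ (μ / (w.length + 1)) ^ 2 * Real.arctan (ratio μ w) := by gcongr

theorem tendsto_sum_ratio_sub_arctan (hμ : 0 ≤ μ) :
    Tendsto (fun n => ∑ w : Fin n → Bool,
      (ratio μ (List.ofFn w) - Real.arctan (ratio μ (List.ofFn w)))) atTop (𝓝 0) := by
  have hbound (n : ℕ) : ∑ w : Fin n → Bool,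
      (ratio μ (List.ofFn w) - Real.arctan (ratio μ (List.ofFn w))) ≤
        (μ / (n + 1)) ^ 2 * Real.arctan μ := by
    rw [← sum_arctan_ratio μ n, mul_sum]
    refine sum_le_sum fun w _ => ?_
    simpa using ratio_sub_arctan_le hμ (List.ofFn w)
  have hnonneg (n : ℕ) : 0 ≤ ∑ w : Fin n → Bool,
      (ratio μ (List.ofFn w) - Real.arctan (ratio μ (List.ofFn w))) :=
    sum_nonneg fun w _ => sub_nonneg.2 (Real.arctan_le_self (div_nonneg hμ (weight_node_pos μ _).le))
  refine squeeze_zero hnonneg hbound ?_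
  have : Tendsto (fun n : ℕ => μ / (n + 1)) atTop (𝓝 0) :=
    tendsto_const_div_atTop_nhds_zero_nat μ |>.comp (tendsto_add_atTop_nat 1) |>.congr
      fun n => by simp
  simpa using (this.pow 2).mul_const (Real.arctan μ)

theorem hasSum_summand (hμ : 0 ≤ μ) : HasSum (fun p : T => summand μ p) (μ - Real.arctan μ) := by
  have hsummand (w : List Bool) : 0 ≤ summand μ (node w) :=
    div_nonneg (pow_nonneg hμ 3) (mul_pos (mul_pos (weight_node_pos μ w)
      (weight_node_pos μ (false :: w))) (weight_node_pos μ (true :: w))).le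
  have h := hasSum_of_eq_add_sum_cons hsummand (ratio_sub_arctan_eq μ) (tendsto_sum_ratio_sub_arctan hμ)
  rw [ratio_nil] at h
  exact nodeEquiv.hasSum_iff.1 h

end Excess

end SternBrocot

theorem stmt_15 (μ : ℝ) (hμ : 0 < μ) :
    HasSum
      (fun p : T =>
        μ ^ 3 / (((p.val.1 : ℝ) * (p.val.2.2.1 : ℝ) +
            μ ^ 2 * (p.val.2.1 : ℝ) * (p.val.2.2.2 : ℝ)) *
          ((p.val.1 : ℝ) * ((p.val.1 : ℝ) + (p.val.2.2.1 : ℝ)) +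
            μ ^ 2 * (p.val.2.1 : ℝ) * ((p.val.2.1 : ℝ) + (p.val.2.2.2 : ℝ))) *
          (((p.val.1 : ℝ) + (p.val.2.2.1 : ℝ)) * (p.val.2.2.1 : ℝ) +
            μ ^ 2 * ((p.val.2.1 : ℝ) + (p.val.2.2.2 : ℝ)) * (p.val.2.2.2 : ℝ))))
      (μ - Real.arctan μ) := by
  convert SternBrocot.hasSum_summand hμ.le using 2 with p
  obtain ⟨⟨a, b, c, d⟩, -⟩ := p
  simp only [SternBrocot.summand, SternBrocot.weight, SternBrocot.child]
  push_cast
  ring
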